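/- arXiv:2410.04504 — 3 statements merged into one kernel-verified Lean document; each statement's English description precedes it below -/
import Mathlib

section
/- Let ρ_1,…,ρ_k be density matrices on ℂ^d, and let C(ρ) = Σ_j E_j† ρ E_j be a quantum channel given by matrices E_j with Σ_j E_j E_j† = I. Then q_re({C(ρ_x)}) ≤ q_re({ρ_x}). -/
open Matrix Filter
open scoped Kronecker Classical ComplexOrder

noncomputable section

/-- Loewner order: `loewnerLE A B` iff `B - A` is positive semidefinite. -/
def loewnerLE {n : Type*} [Fintype n] (A B : Matrix n n ℂ) : Prop := (B - A).PosSemidef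

/-- A density matrix: positive semidefinite with unit trace. -/
def IsDensity {n : Type*} [Fintype n] (ρ : Matrix n n ℂ) : Prop := ρ.PosSemidef ∧ ρ.trace = 1

/-- Real power of a Hermitian matrix, taken on its support (zero eigenvalues map to zero);
junk value `0` on non-Hermitian input. -/
def mpow {n : Type*} [Fintype n] [DecidableEq n] (A : Matrix n n ℂ) (r : ℝ) : Matrix n n ℂ :=
  if hA : A.IsHermitian then
    (hA.eigenvectorUnitary : Matrix n n ℂ) *
      Matrix.diagonal (fun i =>
        (((if hA.eigenvalues i = 0 then (0:ℝ) else hA.eigenvalues i ^ r) : ℝ) : ℂ)) *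
      (star (hA.eigenvectorUnitary : Matrix n n ℂ))
  else 0

/-- Matrix logarithm of a Hermitian matrix, taken on its support. -/
def mlog {n : Type*} [Fintype n] [DecidableEq n] (A : Matrix n n ℂ) : Matrix n n ℂ :=
  if hA : A.IsHermitian then
    (hA.eigenvectorUnitary : Matrix n n ℂ) *
      Matrix.diagonal (fun i => ((Real.log (hA.eigenvalues i) : ℝ) : ℂ)) *
      (star (hA.eigenvectorUnitary : Matrix n n ℂ))
  else 0

/-- Support (range) inclusion for matrices. -/
def suppLE {n : Type*} [Fintype n] (A B : Matrix n n ℂ) : Prop :=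
  LinearMap.range A.mulVecLin ≤ LinearMap.range B.mulVecLin

/-- Finite part of the extended sandwiched Rényi divergence:
`(1/(α-1)) ln ‖σ^{(1-α)/(2α)} ρ σ^{(1-α)/(2α)}‖_α^α` with `‖γ‖_α^α = tr (γ†γ)^{α/2}`. -/
def sandwichedRenyiReal {n : Type*} [Fintype n] [DecidableEq n] (α : ℝ)
    (ρ σ : Matrix n n ℂ) : ℝ :=
  (α - 1)⁻¹ * Real.log
    (mpow ((mpow σ ((1-α)/(2*α)) * ρ * mpow σ ((1-α)/(2*α)))ᴴ *
      (mpow σ ((1-α)/(2*α)) * ρ * mpow σ ((1-α)/(2*α)))) (α/2)).trace.re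

/-- The extended sandwiched Rényi divergence `D̃_α(ρ‖σ)`, `+∞` when `supp ρ ⊄ supp σ`. -/
def sandwichedRenyi {n : Type*} [Fintype n] [DecidableEq n] (α : ℝ)
    (ρ σ : Matrix n n ℂ) : EReal :=
  if suppLE ρ σ then ((sandwichedRenyiReal α ρ σ : ℝ) : EReal) else ⊤

/-- Finite part of the geometric Rényi divergence:
`(1/(α-1)) ln tr[σ (σ^{-1/2} ρ σ^{-1/2})^α]` (inverses taken on the support of `σ`). -/
def geomRenyiReal {n : Type*} [Fintype n] [DecidableEq n] (α : ℝ)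
    (ρ σ : Matrix n n ℂ) : ℝ :=
  (α - 1)⁻¹ * Real.log ((σ * mpow (mpow σ (-(1/2)) * ρ * mpow σ (-(1/2))) α).trace.re)

/-- The geometric Rényi divergence `D̂_α(ρ‖σ)`, `+∞` when `supp ρ ⊄ supp σ`. -/
def geomRenyi {n : Type*} [Fintype n] [DecidableEq n] (α : ℝ)
    (ρ σ : Matrix n n ℂ) : EReal :=
  if suppLE ρ σ then ((geomRenyiReal α ρ σ : ℝ) : EReal) else ⊤

/-- The Umegaki relative entropy `D(ρ‖σ) = tr[ρ(ln ρ - ln σ)]`,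
`+∞` when `supp ρ ⊄ supp σ`. -/
def relEntropy {n : Type*} [Fintype n] [DecidableEq n] (ρ σ : Matrix n n ℂ) : EReal :=
  if suppLE ρ σ then (((ρ * (mlog ρ - mlog σ)).trace.re : ℝ) : EReal) else ⊤

/-- `γ_ε(ρ‖σ) = sup { tr(Qσ) : 0 ≤ Q ≤ I, tr(Qρ) ≤ ε }`. -/
def gammaEps {n : Type*} [Fintype n] [DecidableEq n] (ε : ℝ) (ρ σ : Matrix n n ℂ) : ℝ :=
  sSup { s : ℝ | ∃ Q : Matrix n n ℂ, Q.PosSemidef ∧ loewnerLE Q 1 ∧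
    ((Q * ρ).trace).re ≤ ε ∧ s = ((Q * σ).trace).re }

/-- The hypothesis-testing divergence `D̃_H^ε(ρ‖σ) = - ln(1 - γ_ε(ρ‖σ))`. -/
def DHtest {n : Type*} [Fintype n] [DecidableEq n] (ε : ℝ) (ρ σ : Matrix n n ℂ) : ℝ :=
  - Real.log (1 - gammaEps ε ρ σ)

/-- The revised unambiguous discrimination success probability `P_succ^q(E,p,η)`. -/
def Psucc {n : Type*} [Fintype n] [DecidableEq n] {k : ℕ}
    (ρ : Fin k → Matrix n n ℂ) (p : Fin k → ℝ) (η : ℝ) : ℝ :=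
  sSup { s : ℝ | ∃ Q : Fin k → Matrix n n ℂ, (∀ x, (Q x).PosSemidef) ∧
    loewnerLE (∑ x, Q x) (((1 - η : ℝ) : ℂ) • 1) ∧
    s = ∑ x, p x * ((ρ x * Q x).trace).re }

/-- `q_re({Q_x}) = min { tr P : P Hermitian, P ≥ Q_x for all x }`. -/
def qre {n : Type*} [Fintype n] {k : ℕ} (Q : Fin k → Matrix n n ℂ) : ℝ :=
  sInf { t : ℝ | ∃ P : Matrix n n ℂ, P.IsHermitian ∧ (∀ x, loewnerLE (Q x) P) ∧
    t = (P.trace).re }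

/-- The classical–quantum state `ρ_{XA} = Σ_x p_x |x⟩⟨x| ⊗ ρ_x`. -/
def cqState {n : Type*} {k : ℕ} (p : Fin k → ℝ) (ρ : Fin k → Matrix n n ℂ) :
    Matrix (Fin k × n) (Fin k × n) ℂ :=
  ∑ x, ((p x : ℝ) : ℂ) • (Matrix.single x x (1:ℂ) ⊗ₖ ρ x)

/-- The `m`-fold tensor power `ρ^{⊗m}`. -/
def tpow {d : ℕ} (ρ : Matrix (Fin d) (Fin d) ℂ) (m : ℕ) :
    Matrix (Fin m → Fin d) (Fin m → Fin d) ℂ :=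
  Matrix.of fun i j => ∏ t, ρ (i t) (j t)

/-- Extraction of the `(i,j)` block of a matrix on a product index. -/
def blockAt {R n m : Type*} (i j : R) : Matrix (R × n) (R × m) ℂ →ₗ[ℂ] Matrix n m ℂ where
  toFun X := Matrix.of fun a b => X (i, a) (j, b)
  map_add' _ _ := rfl
  map_smul' _ _ := rfl

/-- `id_R ⊗ Φ`, the trivial extension of a superoperator `Φ` by a reference system `R`. -/
def tensorId {R n m : Type*} (Φ : Matrix n n ℂ →ₗ[ℂ] Matrix m m ℂ) :
    Matrix (R × n) (R × n) ℂ →ₗ[ℂ] Matrix (R × m) (R × m) ℂ where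
  toFun X := Matrix.of fun pq rs => Φ (blockAt pq.1 rs.1 X) pq.2 rs.2
  map_add' X Y := by
    ext pq rs
    simp only [Matrix.of_apply, map_add, Matrix.add_apply]
  map_smul' c X := by
    ext pq rs
    simp only [Matrix.of_apply, _root_.map_smul, Matrix.smul_apply, RingHom.id_apply,
      smul_eq_mul]

/-- Complete positivity of a superoperator. -/
def IsCP {n m : Type*} [Fintype n] [Fintype m] (Φ : Matrix n n ℂ →ₗ[ℂ] Matrix m m ℂ) : Prop :=
  ∀ (r : ℕ) (X : Matrix (Fin r × n) (Fin r × n) ℂ), X.PosSemidef →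
    ((tensorId (R := Fin r) Φ) X).PosSemidef

/-- Trace preservation of a superoperator. -/
def IsTP {n m : Type*} [Fintype n] [Fintype m] (Φ : Matrix n n ℂ →ₗ[ℂ] Matrix m m ℂ) : Prop :=
  ∀ X : Matrix n n ℂ, (Φ X).trace = X.trace

/-- A quantum channel: completely positive and trace preserving. -/
def IsChannel {n m : Type*} [Fintype n] [Fintype m]
    (Φ : Matrix n n ℂ →ₗ[ℂ] Matrix m m ℂ) : Prop :=
  IsCP Φ ∧ IsTP Φ

/-- A positive superoperator. -/
def IsPosMap {n m : Type*} [Fintype n] [Fintype m]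
    (Φ : Matrix n n ℂ →ₗ[ℂ] Matrix m m ℂ) : Prop :=
  ∀ X : Matrix n n ℂ, X.PosSemidef → (Φ X).PosSemidef

/-- A trace-non-increasing superoperator. -/
def IsTraceNonincreasing {n m : Type*} [Fintype n] [Fintype m]
    (Φ : Matrix n n ℂ →ₗ[ℂ] Matrix m m ℂ) : Prop :=
  ∀ X : Matrix n n ℂ, X.PosSemidef → ((Φ X).trace).re ≤ (X.trace).re

/-- The geometric Rényi channel divergence
`D̂_α(T‖N) = sup_r sup_{ρ density on ℂ^r ⊗ ℂ^d} D̂_α((id_r ⊗ T)(ρ)‖(id_r ⊗ N)(ρ))`. -/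
def geomRenyiChannel {d d' : ℕ} (α : ℝ)
    (T N : Matrix (Fin d) (Fin d) ℂ →ₗ[ℂ] Matrix (Fin d') (Fin d') ℂ) : EReal :=
  ⨆ r : ℕ, ⨆ ρ : {ρ : Matrix (Fin r × Fin d) (Fin r × Fin d) ℂ // IsDensity ρ},
    geomRenyi α ((tensorId (R := Fin r) T) ρ.1) ((tensorId (R := Fin r) N) ρ.1)

/-- The state after the `(i+1)`-th invocation of the unknown channel `N` in an adaptive
protocol with initial state `τ` and interleaving channels `A i`:
`σ_1 = (id ⊗ N)(τ)`, `σ_{i+1} = (id ⊗ N)(A_i(σ_i))`. -/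
def outState {d d' : ℕ} (r : ℕ → ℕ)
    (τ : Matrix (Fin (r 0) × Fin d) (Fin (r 0) × Fin d) ℂ)
    (A : ∀ i : ℕ, Matrix (Fin (r i) × Fin d') (Fin (r i) × Fin d') ℂ →ₗ[ℂ]
      Matrix (Fin (r (i+1)) × Fin d) (Fin (r (i+1)) × Fin d) ℂ)
    (N : Matrix (Fin d) (Fin d) ℂ →ₗ[ℂ] Matrix (Fin d') (Fin d') ℂ) :
    (i : ℕ) → Matrix (Fin (r i) × Fin d') (Fin (r i) × Fin d') ℂ
  | 0 => (tensorId (R := Fin (r 0)) N) τ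
  | (i+1) => (tensorId (R := Fin (r (i+1))) N) ((A i) (outState r τ A N i))

/-- Optimal success probability `p_succ^{(nr)}(F,p,η)` of revised unambiguous discrimination
of the channels `N x` with priors `p x`, using `nr` invocations, over all adaptive protocols
(initial state, interleaving channels, and final POVM `M_0,…,M_k` with `M_0 ≥ η·I`). -/
def psuccChan {d d' : ℕ} {k : ℕ}
    (N : Fin k → (Matrix (Fin d) (Fin d) ℂ →ₗ[ℂ] Matrix (Fin d') (Fin d') ℂ))
    (p : Fin k → ℝ) (η : ℝ) (nr : ℕ) : ℝ :=
  sSup { s : ℝ | ∃ (r : ℕ → ℕ)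
    (τ : Matrix (Fin (r 0) × Fin d) (Fin (r 0) × Fin d) ℂ)
    (A : ∀ i : ℕ, Matrix (Fin (r i) × Fin d') (Fin (r i) × Fin d') ℂ →ₗ[ℂ]
      Matrix (Fin (r (i+1)) × Fin d) (Fin (r (i+1)) × Fin d) ℂ)
    (M : Fin (k+1) → Matrix (Fin (r (nr-1)) × Fin d') (Fin (r (nr-1)) × Fin d') ℂ),
    IsDensity τ ∧ (∀ i, IsChannel (A i)) ∧
    (∀ j, (M j).PosSemidef) ∧ (∑ j, M j = 1) ∧ loewnerLE (((η : ℝ) : ℂ) • 1) (M 0) ∧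
    s = ∑ x, p x * ((M x.succ * outState r τ A (N x) (nr - 1)).trace).re }


/-! If `P ≥ ρ_x` for some density matrix `ρ_x`, then `P ≥ 0`; a positive trace-preserving map
`Φ` therefore sends `P` to a Hermitian `Φ P ≥ Φ ρ_x` with the same trace, so every value in the
infimum defining `q_re({ρ_x})` also occurs in the one defining `q_re({Φ ρ_x})`. -/

section

variable {n m : Type*} [Fintype n]

lemma loewnerLE.posSemidef {A B : Matrix n n ℂ} (hAB : loewnerLE A B) (hA : A.PosSemidef) :
    B.PosSemidef := by
  simpa using hAB.add hA

lemma loewnerLE_sum {ι : Type*} [Fintype ι] {Q : ι → Matrix n n ℂ}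
    (hQ : ∀ x, (Q x).PosSemidef) (x : ι) : loewnerLE (Q x) (∑ y, Q y) := by
  classical
  rw [loewnerLE, ← Finset.add_sum_erase _ _ (Finset.mem_univ x), add_sub_cancel_left]
  exact posSemidef_sum _ fun y _ => hQ y

lemma IsPosMap.loewnerLE [Fintype m] {Φ : Matrix n n ℂ →ₗ[ℂ] Matrix m m ℂ} (hΦ : IsPosMap Φ)
    {A B : Matrix n n ℂ} (hAB : loewnerLE A B) : loewnerLE (Φ A) (Φ B) := by
  rw [_root_.loewnerLE, ← map_sub]
  exact hΦ _ hAB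

/- With no constraints the feasible values are all of `ℝ` (only `0` if `n` is empty), and
`sInf ℝ = 0` by convention. -/
lemma qre_fin_zero (Q : Fin 0 → Matrix n n ℂ) : qre Q = 0 := by
  simp only [qre, IsEmpty.forall_iff, true_and]
  rcases isEmpty_or_nonempty n with hn | ⟨⟨i⟩⟩
  · suffices h : {t : ℝ | ∃ P : Matrix n n ℂ, P.IsHermitian ∧ t = P.trace.re} = {0} by
      rw [h, csInf_singleton]
    refine Set.eq_singleton_iff_unique_mem.mpr ⟨⟨0, isHermitian_zero, by simp⟩, ?_⟩
    rintro _ ⟨P, -, rfl⟩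
    simp [Matrix.trace]
  · convert Real.sInf_univ
    refine Set.eq_univ_of_forall fun t => ⟨diagonal (Pi.single i (t : ℂ)), ?_, ?_⟩
    · exact isHermitian_diagonal_of_self_adjoint _ (by ext j; by_cases h : j = i <;> simp [h])
    · simp [trace_diagonal]

theorem qre_map_le [Fintype m] {Φ : Matrix n n ℂ →ₗ[ℂ] Matrix m m ℂ} (hΦ : IsPosMap Φ)
    (hΦtr : IsTP Φ) {k : ℕ} {Q : Fin k → Matrix n n ℂ} (hQ : ∀ x, (Q x).PosSemidef) :
    qre (fun x => Φ (Q x)) ≤ qre Q := by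
  rcases Nat.eq_zero_or_pos k with rfl | hk
  · rw [qre_fin_zero, qre_fin_zero]
  let x₀ : Fin k := ⟨0, hk⟩
  apply csInf_le_csInf
  · refine ⟨0, ?_⟩
    rintro _ ⟨P, -, hPQ, rfl⟩
    exact (Complex.nonneg_iff.mp ((hPQ x₀).posSemidef (hΦ _ (hQ x₀))).trace_nonneg).1
  · exact ⟨_, ∑ x, Q x, (posSemidef_sum _ fun x _ => hQ x).isHermitian, loewnerLE_sum hQ, rfl⟩
  · rintro _ ⟨P, -, hPQ, rfl⟩
    have hP : P.PosSemidef := (hPQ x₀).posSemidef (hQ x₀)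
    exact ⟨Φ P, (hΦ P hP).isHermitian, fun x => hΦ.loewnerLE (hPQ x), by rw [hΦtr]⟩

def krausMap {ι : Type*} [Fintype ι] (E : ι → Matrix n m ℂ) :
    Matrix n n ℂ →ₗ[ℂ] Matrix m m ℂ where
  toFun X := ∑ j, (E j)ᴴ * X * E j
  map_add' X Y := by simp only [Matrix.mul_add, Matrix.add_mul, Finset.sum_add_distrib]
  map_smul' c X := by
    simp only [Matrix.mul_smul, Matrix.smul_mul, Finset.smul_sum, RingHom.id_apply]

variable {ι : Type*} [Fintype ι] (E : ι → Matrix n m ℂ)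

lemma krausMap_apply (X : Matrix n n ℂ) : krausMap E X = ∑ j, (E j)ᴴ * X * E j := rfl

lemma isPosMap_krausMap [Fintype m] : IsPosMap (krausMap E) := fun _ hX =>
  posSemidef_sum _ fun j _ => hX.conjTranspose_mul_mul_same (E j)

lemma isTP_krausMap [Fintype m] [DecidableEq n] (hE : ∑ j, E j * (E j)ᴴ = 1) :
    IsTP (krausMap E) := by
  intro X
  calc (krausMap E X).trace = ∑ j, (E j * (E j)ᴴ * X).trace := by
        rw [krausMap_apply, trace_sum]
        refine Finset.sum_congr rfl fun j _ => ?_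
        rw [trace_mul_cycle, Matrix.mul_assoc]
    _ = X.trace := by rw [← trace_sum, ← Finset.sum_mul, hE, Matrix.one_mul]

end

/-- monotonicity of `q_re` under a quantum channel in Kraus form
`C(ρ) = Σ_j E_j† ρ E_j` with `Σ_j E_j E_j† = I`: `q_re({C(ρ_x)}) ≤ q_re({ρ_x})`. -/
theorem stmt9 {d k m : ℕ}
    (ρ : Fin k → Matrix (Fin d) (Fin d) ℂ) (hρ : ∀ x, IsDensity (ρ x))
    (E : Fin m → Matrix (Fin d) (Fin d) ℂ) (hE : ∑ j, E j * (E j)ᴴ = 1) :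
    qre (fun x => ∑ j, (E j)ᴴ * ρ x * E j) ≤ qre ρ :=
  qre_map_le (isPosMap_krausMap E) (isTP_krausMap E hE) fun x => (hρ x).1

end
end

section
/- Let ρ_1,…,ρ_k be density matrices on ℂ^d. Then there exists η* ∈ [0,1) such that for every η ∈ [η*,1), q_re({ρ_x}) = sup over probability vectors p = (p_1,…,p_k) with p_x > 0 and Σ_x p_x = 1 of the ratio P_succ^q(E,p,η) / P_succ^c(p,η), where P_succ^c(p,η) = (1−η)·max_x p_x, and the supremum is attained at the uniform distribution p_x = 1/k. -/
open Matrix Filter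
open scoped Kronecker Classical ComplexOrder

noncomputable section

/-!
Take `η* = 0` and write `c = 1 - η`. Weak duality: if `Qₓ ≥ 0`, `∑ₓ Qₓ ≤ c` and `P ≥ ρₓ` for
all `x`, then `∑ₓ pₓ tr(ρₓ Qₓ) ≤ (max p) ∑ₓ tr(P Qₓ) ≤ c (max p) tr P`, which bounds every ratio
by `q_re`. Equality for uniform `p` is strong duality. The point `(0, S)`, with `S` the optimal
primal value, lies outside the open convex set of pairs `(Y, s)` for which some `Q ≥ 0` has
`∑ₓ Qₓ < c + Re Y` strictly and `s < ∑ₓ pₓ tr(ρₓ Qₓ)`. A separating functional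
`(Y, s) ↦ g Y + λ s` has `λ > 0`, and writing `g = Re tr(G ·)` on Hermitian matrices,
`P = -G / λ` is dual feasible with `c tr P ≤ S`.
-/

open scoped MatrixOrder ComplexStarModule Topology

theorem isOpen_setOf_exists_pos_algebraMap_le {X A : Type*} [TopologicalSpace X]
    [CStarAlgebra A] [PartialOrder A] [StarOrderedRing A] {f : X → A} (hf : Continuous f)
    (hsa : ∀ x, IsSelfAdjoint (f x)) :
    IsOpen {x | ∃ r > 0, algebraMap ℝ A r ≤ f x} := by
  refine isOpen_iff_forall_mem_open.mpr fun x₀ ⟨r, hr, hle⟩ => ?_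
  refine ⟨{x | ‖f x - f x₀‖ < r}, fun x hx => ⟨r - ‖f x - f x₀‖, sub_pos.mpr hx, ?_⟩,
    isOpen_lt (by fun_prop) continuous_const, by simpa using hr⟩
  calc algebraMap ℝ A (r - ‖f x - f x₀‖)
        = algebraMap ℝ A r + -algebraMap ℝ A ‖f x - f x₀‖ := by rw [map_sub, sub_eq_add_neg]
    _ ≤ f x₀ + (f x - f x₀) :=
        add_le_add hle ((hsa x).sub (hsa x₀)).neg_algebraMap_norm_le_self
    _ = f x := add_sub_cancel _ _

theorem le_of_forall_pos_add_mul_le {A B C : ℝ} (h : ∀ t > 0, A + t * B ≤ C) : A ≤ C := by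
  have hcont : Continuous fun t : ℝ => A + t * B := by fun_prop
  have hlim : Tendsto (fun t => A + t * B) (𝓝[>] 0) (𝓝 A) := by
    simpa using (hcont.tendsto 0).mono_left nhdsWithin_le_nhds
  exact le_of_tendsto hlim (eventually_nhdsWithin_of_forall h)

theorem nonpos_of_forall_pos_mul_le {B C : ℝ} (h : ∀ t > 0, t * B ≤ C) : B ≤ 0 :=
  le_of_forall_pos_add_mul_le (B := -C) fun s hs => by
    have := h s⁻¹ (inv_pos.mpr hs)
    rw [inv_mul_le_iff₀ hs] at this
    linarith

namespace Matrix

variable {n : Type*} [Fintype n]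

theorem re_trace_mul_nonneg {A B : Matrix n n ℂ} (hA : 0 ≤ A) (hB : 0 ≤ B) :
    0 ≤ (A * B).trace.re := by
  obtain ⟨C, rfl⟩ := CStarAlgebra.nonneg_iff_eq_star_mul_self.mp hB
  rw [← mul_assoc, trace_mul_cycle]
  exact (Complex.nonneg_iff.mp (star_right_conjugate_nonneg hA C).posSemidef.trace_nonneg).1

theorem re_trace_mul_le_of_le {A B C : Matrix n n ℂ} (hA : 0 ≤ A) (hBC : B ≤ C) :
    (B * A).trace.re ≤ (C * A).trace.re := by
  have := re_trace_mul_nonneg (sub_nonneg.mpr hBC) hA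
  rwa [sub_mul, trace_sub, Complex.sub_re, sub_nonneg] at this

theorem nonneg_of_forall_re_trace_mul_nonneg {A : Matrix n n ℂ} (hA : A.IsHermitian)
    (h : ∀ R, 0 ≤ R → 0 ≤ (A * R).trace.re) : 0 ≤ A := by
  refine (PosSemidef.of_dotProduct_mulVec_nonneg hA fun x => ?_).nonneg
  have hx := h _ (posSemidef_vecMulVec_self_star x).nonneg
  rw [mul_vecMulVec, trace_vecMulVec, dotProduct_comm] at hx
  exact Complex.nonneg_iff.mpr ⟨hx, (hA.im_star_dotProduct_mulVec_self x).symm⟩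

theorem exists_trace_mul_eq (φ : Matrix n n ℂ →ₗ[ℂ] ℂ) :
    ∃ G : Matrix n n ℂ, ∀ A, (G * A).trace = φ A := by
  refine ⟨of fun j i => φ (single i j 1), fun A => ?_⟩
  conv_rhs => rw [matrix_eq_sum_single A]
  simp only [map_sum, trace, diag, mul_apply, of_apply]
  rw [Finset.sum_comm]
  refine Finset.sum_congr rfl fun i _ => Finset.sum_congr rfl fun j _ => ?_
  rw [show single i j (A i j) = A i j • single i j (1 : ℂ) by
    rw [smul_single, smul_eq_mul, mul_one], map_smul, smul_eq_mul, mul_comm]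

theorem exists_isHermitian_re_trace_mul_eq (g : Matrix n n ℂ →ₗ[ℝ] ℝ) :
    ∃ G : Matrix n n ℂ, G.IsHermitian ∧ ∀ R, R.IsHermitian → (G * R).trace.re = g R := by
  obtain ⟨G, hG⟩ := exists_trace_mul_eq (Module.Dual.extendRCLike (𝕜 := ℂ) g)
  refine ⟨(ℜ G : Matrix n n ℂ), (ℜ G).prop, fun R hR => ?_⟩
  have hstar : (star G * R).trace.re = (G * R).trace.re := by
    rw [star_eq_conjTranspose, ← hR.eq, ← conjTranspose_mul, trace_conjTranspose, hR.eq,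
      trace_mul_comm, Complex.star_def, Complex.conj_re]
  have hg : (G * R).trace.re = g R := by
    rw [hG]
    exact Module.Dual.re_extendRCLike_apply (𝕜 := ℂ) g R
  rw [realPart_apply_coe, smul_mul_assoc, trace_smul, add_mul, trace_add, Complex.smul_re,
    Complex.add_re, hstar, hg, smul_eq_mul]
  ring

theorem isOpen_setOf_exists_pos_smul_one_le_realPart_add [DecidableEq n] {B : Matrix n n ℂ}
    (hB : B.IsHermitian) :
    IsOpen {Y : Matrix n n ℂ | ∃ r > (0 : ℝ), r • 1 ≤ (ℜ Y : Matrix n n ℂ) + B} := by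
  -- The L2 operator norm makes `Matrix n n ℂ` a C⋆-algebra without changing its topology.
  open scoped Matrix.Norms.L2Operator in
  simpa only [Algebra.algebraMap_eq_smul_one] using
    isOpen_setOf_exists_pos_algebraMap_le (A := Matrix n n ℂ)
      (f := fun Y => (ℜ Y : Matrix n n ℂ) + B)
      (by simp only [realPart_apply_coe]; fun_prop) fun Y => (ℜ Y).prop.add hB

end Matrix

section UpperBounds

variable {n ι : Type*} [Fintype n]

def upperBoundTraces (ρ : ι → Matrix n n ℂ) : Set ℝ :=
  { t | ∃ P : Matrix n n ℂ, P.IsHermitian ∧ (∀ x, loewnerLE (ρ x) P) ∧ t = (P.trace).re }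

theorem qre_eq_sInf {k : ℕ} (ρ : Fin k → Matrix n n ℂ) :
    qre ρ = sInf (upperBoundTraces ρ) := rfl

theorem mem_upperBoundTraces {ρ : ι → Matrix n n ℂ} {P : Matrix n n ℂ} (hP : P.IsHermitian)
    (hρP : ∀ x, ρ x ≤ P) : P.trace.re ∈ upperBoundTraces ρ :=
  ⟨P, hP, hρP, rfl⟩

theorem upperBoundTraces_nonempty [Fintype ι] {ρ : ι → Matrix n n ℂ} (hρ : ∀ x, 0 ≤ ρ x) :
    (upperBoundTraces ρ).Nonempty :=
  ⟨_, mem_upperBoundTraces (Finset.sum_nonneg fun x _ => hρ x).posSemidef.isHermitian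
    fun x => Finset.single_le_sum (fun y _ => hρ y) (Finset.mem_univ x)⟩

theorem bddBelow_upperBoundTraces [Nonempty ι] {ρ : ι → Matrix n n ℂ} (hρ : ∀ x, 0 ≤ ρ x) :
    BddBelow (upperBoundTraces ρ) := by
  obtain ⟨x₀⟩ := ‹Nonempty ι›
  refine ⟨0, fun _ ⟨P, _, hρP, ht⟩ => ht ▸ ?_⟩
  exact (Complex.nonneg_iff.mp ((hρ x₀).trans (hρP x₀)).posSemidef.trace_nonneg).1

end UpperBounds

section SuccessProbabilities

variable {n ι : Type*} [Fintype n] [Fintype ι]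

def successProb (ρ : ι → Matrix n n ℂ) (p : ι → ℝ) (Q : ι → Matrix n n ℂ) : ℝ :=
  ∑ x, p x * ((ρ x * Q x).trace).re

theorem successProb_add_smul (ρ : ι → Matrix n n ℂ) (p : ι → ℝ) (Q₁ Q₂ : ι → Matrix n n ℂ)
    (a b : ℝ) :
    successProb ρ p (a • Q₁ + b • Q₂) = a * successProb ρ p Q₁ + b * successProb ρ p Q₂ := by
  simp only [successProb, Finset.mul_sum, ← Finset.sum_add_distrib]
  refine Finset.sum_congr rfl fun x _ => ?_
  simp only [Pi.add_apply, Pi.smul_apply, mul_add, Matrix.mul_smul, Matrix.trace_add,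
    Matrix.trace_smul, Complex.add_re, Complex.smul_re, smul_eq_mul]
  ring

theorem successProb_single [DecidableEq ι] (ρ : ι → Matrix n n ℂ) (p : ι → ℝ) (x : ι)
    (A : Matrix n n ℂ) :
    successProb ρ p (Pi.single x A) = p x * (ρ x * A).trace.re := by
  rw [successProb, Fintype.sum_eq_single x fun y hy => by simp [hy], Pi.single_eq_same]

variable [DecidableEq n]

def successProbs (ρ : ι → Matrix n n ℂ) (p : ι → ℝ) (c : ℝ) : Set ℝ :=
  { s | ∃ Q : ι → Matrix n n ℂ, (∀ x, (Q x).PosSemidef) ∧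
    loewnerLE (∑ x, Q x) (((c : ℝ) : ℂ) • 1) ∧ s = successProb ρ p Q }

theorem Psucc_eq_sSup {k : ℕ} (ρ : Fin k → Matrix n n ℂ) (p : Fin k → ℝ) (η : ℝ) :
    Psucc ρ p η = sSup (successProbs ρ p (1 - η)) := rfl

variable {ρ : ι → Matrix n n ℂ} {p : ι → ℝ} {c : ℝ}

theorem mem_successProbs {Q : ι → Matrix n n ℂ} (hQ : ∀ x, 0 ≤ Q x) (hQc : ∑ x, Q x ≤ c • 1) :
    successProb ρ p Q ∈ successProbs ρ p c :=
  ⟨Q, fun x => (hQ x).posSemidef, by rwa [Complex.coe_smul], rfl⟩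

theorem zero_mem_successProbs (hc : 0 ≤ c) : 0 ∈ successProbs ρ p c := by
  simpa [successProb] using mem_successProbs (ρ := ρ) (p := p) (fun _ => le_rfl)
    (by simpa using smul_nonneg hc zero_le_one)

theorem successProb_le_mul_trace [Nonempty ι] {Q : ι → Matrix n n ℂ} {P : Matrix n n ℂ} {m : ℝ}
    (hρ : ∀ x, 0 ≤ ρ x) (hp : ∀ x, 0 ≤ p x) (hm : ∀ x, p x ≤ m)
    (hQ : ∀ x, 0 ≤ Q x) (hQc : ∑ x, Q x ≤ c • 1) (hρP : ∀ x, ρ x ≤ P) :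
    successProb ρ p Q ≤ c * m * P.trace.re := by
  obtain ⟨x₀⟩ := ‹Nonempty ι›
  have hm₀ : 0 ≤ m := (hp x₀).trans (hm x₀)
  have hP : 0 ≤ P := (hρ x₀).trans (hρP x₀)
  calc successProb ρ p Q ≤ ∑ x, m * (P * Q x).trace.re :=
        Finset.sum_le_sum fun x _ => mul_le_mul (hm x)
          (Matrix.re_trace_mul_le_of_le (hQ x) (hρP x))
          (Matrix.re_trace_mul_nonneg (hρ x) (hQ x)) hm₀
    _ = m * ((∑ x, Q x) * P).trace.re := by
        rw [← Finset.mul_sum, Matrix.trace_mul_comm, Matrix.mul_sum, Matrix.trace_sum,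
          Complex.re_sum]
    _ ≤ m * ((c • 1 : Matrix n n ℂ) * P).trace.re :=
        mul_le_mul_of_nonneg_left (Matrix.re_trace_mul_le_of_le hP hQc) hm₀
    _ = c * m * P.trace.re := by
        rw [smul_mul_assoc, one_mul, Matrix.trace_smul, Complex.smul_re, smul_eq_mul]
        ring

theorem sSup_successProbs_le [Nonempty ι] {m : ℝ} (hρ : ∀ x, 0 ≤ ρ x) (hp : ∀ x, 0 ≤ p x)
    (hm : ∀ x, p x ≤ m) (hc : 0 ≤ c) :
    sSup (successProbs ρ p c) ≤ c * m * sInf (upperBoundTraces ρ) := by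
  obtain ⟨x₀⟩ := ‹Nonempty ι›
  rw [← smul_eq_mul, ← Real.sInf_smul_of_nonneg (mul_nonneg hc ((hp x₀).trans (hm x₀)))]
  refine csSup_le ⟨0, zero_mem_successProbs hc⟩ fun _ ⟨Q, hQ, hQc, hs⟩ => ?_
  refine le_csInf (upperBoundTraces_nonempty hρ).smul_set ?_
  rintro _ ⟨_, ⟨P, _, hρP, rfl⟩, rfl⟩
  simp only [hs, smul_eq_mul]
  exact successProb_le_mul_trace hρ hp hm (fun x => (hQ x).nonneg)
    (by rwa [← Complex.coe_smul]) hρP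

theorem bddAbove_successProbs [Nonempty ι] (hρ : ∀ x, 0 ≤ ρ x) (hp : ∀ x, 0 ≤ p x) :
    BddAbove (successProbs ρ p c) := by
  obtain ⟨_, P, _, hρP, rfl⟩ := upperBoundTraces_nonempty hρ
  refine ⟨c * (∑ x, p x) * P.trace.re, fun _ ⟨Q, hQ, hQc, hs⟩ => hs ▸ ?_⟩
  exact successProb_le_mul_trace hρ hp
    (fun x => Finset.single_le_sum (fun y _ => hp y) (Finset.mem_univ x))
    (fun x => (hQ x).nonneg) (by rwa [← Complex.coe_smul]) hρP

end SuccessProbabilities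

section StrongDuality

variable {n ι : Type*} [Fintype n] [DecidableEq n] [Fintype ι]

def perturbedHypograph (ρ : ι → Matrix n n ℂ) (p : ι → ℝ) (c : ℝ) : Set (Matrix n n ℂ × ℝ) :=
  { w | ∃ Q : ι → Matrix n n ℂ, (∀ x, 0 ≤ Q x) ∧
    (∃ r > (0 : ℝ), r • 1 ≤ (ℜ w.1 : Matrix n n ℂ) + (c • 1 - ∑ x, Q x)) ∧
    w.2 < successProb ρ p Q }

variable {ρ : ι → Matrix n n ℂ} {p : ι → ℝ} {c : ℝ}

theorem isOpen_perturbedHypograph : IsOpen (perturbedHypograph ρ p c) := by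
  have : perturbedHypograph ρ p c = ⋃ Q ∈ {Q : ι → Matrix n n ℂ | ∀ x, 0 ≤ Q x},
      {Y | ∃ r > (0 : ℝ), r • 1 ≤ (ℜ Y : Matrix n n ℂ) + (c • 1 - ∑ x, Q x)} ×ˢ
        Set.Iio (successProb ρ p Q) := by
    ext w
    simp [perturbedHypograph, and_left_comm]
  rw [this]
  refine isOpen_biUnion fun Q hQ => IsOpen.prod ?_ isOpen_Iio
  exact Matrix.isOpen_setOf_exists_pos_smul_one_le_realPart_add
    (((IsSelfAdjoint.all c).smul (IsSelfAdjoint.one _)).sub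
      (IsSelfAdjoint.of_nonneg (Finset.sum_nonneg fun x _ => hQ x)))

theorem convex_perturbedHypograph : Convex ℝ (perturbedHypograph ρ p c) := by
  rintro ⟨Y₁, s₁⟩ ⟨Q₁, hQ₁, ⟨r₁, hr₁, hle₁⟩, hs₁⟩ ⟨Y₂, s₂⟩ ⟨Q₂, hQ₂, ⟨r₂, hr₂, hle₂⟩, hs₂⟩
    a b ha hb hab
  refine ⟨a • Q₁ + b • Q₂, fun x => add_nonneg (smul_nonneg ha (hQ₁ x)) (smul_nonneg hb (hQ₂ x)),
    ⟨a * r₁ + b * r₂, ?_, ?_⟩, ?_⟩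
  · exact convex_Ioi (0 : ℝ) (Set.mem_Ioi.mpr hr₁) (Set.mem_Ioi.mpr hr₂) ha hb hab
  · calc (a * r₁ + b * r₂) • (1 : Matrix n n ℂ) = a • (r₁ • 1) + b • (r₂ • 1) := by module
      _ ≤ a • ((ℜ Y₁ : Matrix n n ℂ) + (c • 1 - ∑ x, Q₁ x)) +
            b • ((ℜ Y₂ : Matrix n n ℂ) + (c • 1 - ∑ x, Q₂ x)) :=
          add_le_add (smul_le_smul_of_nonneg_left hle₁ ha) (smul_le_smul_of_nonneg_left hle₂ hb)
      _ = (ℜ (a • Y₁ + b • Y₂) : Matrix n n ℂ) + (c • 1 - ∑ x, (a • Q₁ + b • Q₂) x) := by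
          obtain rfl : b = 1 - a := by linarith
          simp only [Pi.add_apply, Pi.smul_apply, Finset.sum_add_distrib, ← Finset.smul_sum,
            map_add, map_smul, AddSubgroup.coe_add, selfAdjoint.val_smul]
          module
  · have := convex_Ioi (0 : ℝ) (sub_pos.mpr hs₁) (sub_pos.mpr hs₂) ha hb hab
    simp only [Set.mem_Ioi, smul_eq_mul] at this
    simp only [Prod.smul_mk, Prod.mk_add_mk, smul_eq_mul, successProb_add_smul]
    linarith

theorem notMem_perturbedHypograph (hbdd : BddAbove (successProbs ρ p c)) :
    (0, sSup (successProbs ρ p c)) ∉ perturbedHypograph ρ p c := by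
  rintro ⟨Q, hQ, ⟨r, hr, hle⟩, hlt⟩
  have hQc : ∑ x, Q x ≤ c • 1 := by
    simpa using (smul_nonneg hr.le zero_le_one).trans hle
  exact (le_csSup hbdd (mem_successProbs hQ hQc)).not_gt hlt

theorem mem_perturbedHypograph {Q : ι → Matrix n n ℂ} (hQ : ∀ x, 0 ≤ Q x) {t s : ℝ} (ht : 0 < t)
    (hs : s < successProb ρ p Q) :
    (∑ x, Q x - c • 1 + t • 1, s) ∈ perturbedHypograph ρ p c := by
  refine ⟨Q, hQ, ⟨t, ht, le_of_eq ?_⟩, hs⟩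
  have hsa : IsSelfAdjoint (∑ x, Q x - c • 1 + t • (1 : Matrix n n ℂ)) :=
    ((IsSelfAdjoint.of_nonneg (Finset.sum_nonneg fun x _ => hQ x)).sub
      ((IsSelfAdjoint.all c).smul (IsSelfAdjoint.one _))).add
      ((IsSelfAdjoint.all t).smul (IsSelfAdjoint.one _))
  rw [hsa.coe_realPart]
  abel

theorem exists_lagrangeMultiplier (hc : 0 < c) (hbdd : BddAbove (successProbs ρ p c)) :
    ∃ (g : Matrix n n ℂ →ₗ[ℝ] ℝ) (l : ℝ), 0 < l ∧ ∀ Q : ι → Matrix n n ℂ, (∀ x, 0 ≤ Q x) →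
      g (∑ x, Q x - c • 1) + l * successProb ρ p Q ≤ l * sSup (successProbs ρ p c) := by
  obtain ⟨f, hf⟩ := geometric_hahn_banach_open_point convex_perturbedHypograph
    isOpen_perturbedHypograph (notMem_perturbedHypograph hbdd)
  set S := sSup (successProbs ρ p c)
  set g : Matrix n n ℂ →ₗ[ℝ] ℝ := f.toLinearMap ∘ₗ LinearMap.inl ℝ _ ℝ
  have hf_apply : ∀ Y s, f (Y, s) = g Y + s * f (0, 1) := fun Y s => by
    rw [show ((Y, s) : Matrix n n ℂ × ℝ) = (Y, 0) + s • (0, 1) by simp, map_add, map_smul,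
      smul_eq_mul]
    rfl
  have hf_zero : ∀ s, f (0, s) = s * f (0, 1) := fun s => by rw [hf_apply, map_zero, zero_add]
  refine ⟨g, f (0, 1), ?_, fun Q hQ => ?_⟩
  · -- `(0, v)` lies in the region for every `v < 0`; taking also `v < S` forces `l > 0`.
    by_contra! hl
    have hv := hf _ (mem_perturbedHypograph (ρ := ρ) (p := p) (c := c)
      (fun _ => le_refl (0 : Matrix n n ℂ)) hc
      (s := min (-1) (S - 1)) (by simp [successProb]))
    rw [Finset.sum_const_zero, zero_sub, neg_add_cancel, hf_zero, hf_zero S] at hv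
    nlinarith [min_le_right (-1) (S - 1)]
  · refine le_of_forall_pos_add_mul_le (B := g 1 - f (0, 1)) fun t ht => ?_
    have := hf _ (mem_perturbedHypograph (ρ := ρ) (p := p) (c := c) hQ ht (sub_lt_self _ ht))
    rw [hf_apply, hf_zero S, map_add, map_smul, smul_eq_mul] at this
    linarith

theorem exists_le_of_lagrangeMultiplier (hρ : ∀ x, (ρ x).IsHermitian)
    {g : Matrix n n ℂ →ₗ[ℝ] ℝ} {l S : ℝ} (hl : 0 < l)
    (h : ∀ Q : ι → Matrix n n ℂ, (∀ x, 0 ≤ Q x) →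
      g (∑ x, Q x - c • 1) + l * successProb ρ p Q ≤ l * S) :
    ∃ P : Matrix n n ℂ, (∀ x, p x • ρ x ≤ P) ∧ c * P.trace.re ≤ S := by
  obtain ⟨G, hG, hGg⟩ := Matrix.exists_isHermitian_re_trace_mul_eq g
  have hzero : -(c * g 1) ≤ l * S := by
    simpa [successProb] using h 0 fun _ => le_rfl
  have hray : ∀ x R, 0 ≤ R → g R + l * (p x * (ρ x * R).trace.re) ≤ 0 := by
    intro x R hR
    refine nonpos_of_forall_pos_mul_le (C := l * S + c * g 1) fun t ht => ?_
    have hQ : 0 ≤ Pi.single x (t • R) :=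
      (Pi.single_nonneg (α := fun _ => Matrix n n ℂ)).mpr (smul_nonneg ht.le hR)
    have := h (Pi.single x (t • R)) hQ
    rw [Finset.sum_pi_single', if_pos (Finset.mem_univ x), successProb_single, map_sub, map_smul,
      map_smul, Matrix.mul_smul, Matrix.trace_smul, Complex.smul_re] at this
    simp only [smul_eq_mul] at this
    linarith
  refine ⟨(-l⁻¹) • G, fun x => sub_nonneg.mp ?_, ?_⟩
  · refine Matrix.nonneg_of_forall_re_trace_mul_nonneg
      (((IsSelfAdjoint.all _).smul hG).sub ((IsSelfAdjoint.all _).smul (hρ x))) fun R hR => ?_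
    have : (((-l⁻¹) • G - p x • ρ x) * R).trace.re
        = -l⁻¹ * (g R + l * (p x * (ρ x * R).trace.re)) := by
      rw [sub_mul, smul_mul_assoc, smul_mul_assoc, Matrix.trace_sub, Matrix.trace_smul,
        Matrix.trace_smul, Complex.sub_re, Complex.smul_re, Complex.smul_re, smul_eq_mul,
        smul_eq_mul, hGg R hR.posSemidef.isHermitian]
      field_simp
      ring
    rw [this]
    exact mul_nonneg_of_nonpos_of_nonpos (by simpa using hl.le) (hray x R hR)
  · have : c * ((-l⁻¹) • G).trace.re = l⁻¹ * -(c * g 1) := by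
      rw [Matrix.trace_smul, Complex.smul_re, smul_eq_mul, ← hGg 1 isHermitian_one, mul_one]
      ring
    rw [this, inv_mul_le_iff₀ hl]
    exact hzero

theorem exists_le_sSup_successProbs (hρ : ∀ x, (ρ x).IsHermitian) (hc : 0 < c)
    (hbdd : BddAbove (successProbs ρ p c)) :
    ∃ P : Matrix n n ℂ, (∀ x, p x • ρ x ≤ P) ∧ c * P.trace.re ≤ sSup (successProbs ρ p c) :=
  let ⟨_, _, hl, h⟩ := exists_lagrangeMultiplier hc hbdd
  exists_le_of_lagrangeMultiplier hρ hl h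

end StrongDuality

section Psucc

variable {n : Type*} [Fintype n] [DecidableEq n] {k : ℕ} [NeZero k] {ρ : Fin k → Matrix n n ℂ}
  {η : ℝ}

theorem Psucc_le_mul_qre {p : Fin k → ℝ} {m : ℝ} (hρ : ∀ x, 0 ≤ ρ x) (hp : ∀ x, 0 ≤ p x)
    (hm : ∀ x, p x ≤ m) (hη : η ≤ 1) :
    Psucc ρ p η ≤ (1 - η) * m * qre ρ := by
  rw [Psucc_eq_sSup, qre_eq_sInf]
  exact sSup_successProbs_le hρ hp hm (sub_nonneg.mpr hη)

theorem Psucc_const_eq (hρ : ∀ x, 0 ≤ ρ x) {a : ℝ} (ha : 0 < a) (hη : η < 1) :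
    Psucc ρ (fun _ => a) η = (1 - η) * a * qre ρ := by
  refine le_antisymm (Psucc_le_mul_qre hρ (fun _ => ha.le) (fun _ => le_rfl) hη.le) ?_
  obtain ⟨P, hρP, htr⟩ := exists_le_sSup_successProbs (fun x => (hρ x).posSemidef.isHermitian)
    (sub_pos.mpr hη) (bddAbove_successProbs hρ fun _ => ha.le)
  have hρP' : ∀ x, ρ x ≤ a⁻¹ • P := fun x => (le_inv_smul_iff_of_pos ha).mpr (hρP x)
  have hqre : qre ρ ≤ a⁻¹ * P.trace.re := by
    have hP : (a⁻¹ • P).IsHermitian := ((hρ 0).trans (hρP' 0)).posSemidef.isHermitian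
    rw [qre_eq_sInf]
    simpa [Matrix.trace_smul] using
      csInf_le (bddBelow_upperBoundTraces hρ) (mem_upperBoundTraces hP hρP')
  calc (1 - η) * a * qre ρ ≤ (1 - η) * a * (a⁻¹ * P.trace.re) :=
        mul_le_mul_of_nonneg_left hqre (mul_nonneg (sub_pos.mpr hη).le ha.le)
    _ = (1 - η) * P.trace.re := by field_simp
    _ ≤ Psucc ρ (fun _ => a) η := htr

end Psucc

/-- operational interpretation of `q_re`: there is `η* ∈ [0,1)` such that
for every `η ∈ [η*,1)`, `q_re({ρ_x})` is the supremum over probability vectors `p` of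
`P_succ^q(E,p,η) / P_succ^c(p,η)` with `P_succ^c(p,η) = (1-η) max_x p_x`, and the
supremum is attained at the uniform distribution. -/
theorem stmt12 {d k : ℕ} (hk : 0 < k)
    (ρ : Fin k → Matrix (Fin d) (Fin d) ℂ) (hρ : ∀ x, IsDensity (ρ x)) :
    ∃ ηs : ℝ, ηs ∈ Set.Ico (0:ℝ) 1 ∧ ∀ η ∈ Set.Ico ηs 1,
      (∀ p : Fin k → ℝ, (∀ x, 0 < p x) → ∑ x, p x = 1 →
        Psucc ρ p η / ((1 - η) * (⨆ x, p x)) ≤ qre ρ) ∧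
      Psucc ρ (fun _ => (k:ℝ)⁻¹) η / ((1 - η) * (⨆ _x : Fin k, ((k:ℝ)⁻¹))) = qre ρ := by
  have : NeZero k := ⟨hk.ne'⟩
  have hρ₀ : ∀ x, 0 ≤ ρ x := fun x => (hρ x).1.nonneg
  refine ⟨0, ⟨le_rfl, one_pos⟩, fun η hη => ⟨fun p hp _ => ?_, ?_⟩⟩
  · have hle : ∀ x, p x ≤ ⨆ x, p x := le_ciSup (Set.finite_range p).bddAbove
    rw [div_le_iff₀ (mul_pos (sub_pos.mpr hη.2) ((hp 0).trans_le (hle 0))), mul_comm]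
    exact Psucc_le_mul_qre hρ₀ (fun x => (hp x).le) hle hη.2.le
  · rw [ciSup_const, Psucc_const_eq hρ₀ (by positivity) hη.2]
    exact mul_div_cancel_left₀ _ (mul_pos (sub_pos.mpr hη.2) (by positivity)).ne'

end
end

section
/- Let α ∈ (1,2], and let ρ_1, σ_1 be density matrices on ℂ^{d_1} and ρ_2, σ_2 be density matrices on ℂ^{d_2}. Then the geometric Rényi divergence is additive under tensor products: D̂_α(ρ_1 ⊗ ρ_2 ‖ σ_1 ⊗ σ_2) = D̂_α(ρ_1‖σ_1) + D̂_α(ρ_2‖σ_2). -/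
open Matrix Filter
open scoped Kronecker Classical ComplexOrder

noncomputable section

/-!
The Kronecker product of eigenbases of `A` and `B` diagonalises `A ⊗ B` with eigenvalues
`λᵢ μⱼ`, and `(λμ)^r = λ^r μ^r` for `λ, μ ≥ 0`; so every matrix power occurring in `D̂_α`
factors over the tensor product, and the trace `tr[σ (σ^{-1/2} ρ σ^{-1/2})^α]` becomes a
product. Since `σ^0` is the support projection of `σ`, the support condition factors as well
(the states being nonzero). When the supports are included the two traces are strictly
positive, and the logarithm turns their product into a sum.
-/

section FunctionalCalculus

open Polynomial

variable {𝕜 n m : Type*} [RCLike 𝕜] [Fintype n] [DecidableEq n] [Fintype m] [DecidableEq m]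

theorem spectrum_real_diagonal_ofReal (d : n → ℝ) :
    spectrum ℝ (diagonal fun i => (d i : 𝕜)) = Set.range d := by
  rw [← spectrum.preimage_algebraMap 𝕜, spectrum_diagonal]
  ext x
  simp [RCLike.algebraMap_eq_ofReal]

theorem aeval_diagonal_ofReal (d : n → ℝ) (p : ℝ[X]) :
    aeval (diagonal fun i => (d i : 𝕜)) p = diagonal fun i => ((p.eval (d i) : ℝ) : 𝕜) := by
  rw [← diagonalAlgHom_apply (R := ℝ), aeval_algHom_apply, diagonalAlgHom_apply]
  congr 1
  ext i
  rw [aeval_pi_apply₂, ← RCLike.algebraMap_eq_ofReal, aeval_algebraMap_apply_eq_algebraMap_eval]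

/-- On the finite spectrum `f` agrees with a polynomial, and polynomials commute with unitary
conjugation. -/
theorem cfc_unitary_mul_diagonal_mul_star (f : ℝ → ℝ) (U : unitaryGroup n 𝕜) (d : n → ℝ) :
    cfc f ((U : Matrix n n 𝕜) * diagonal (fun i => (d i : 𝕜)) * star (U : Matrix n n 𝕜)) =
      U * diagonal (fun i => (f (d i) : 𝕜)) * star (U : Matrix n n 𝕜) := by
  classical
  set p := Lagrange.interpolate (Finset.univ.image d) id f
  have hp : ∀ i, p.eval (d i) = f (d i) := fun i =>
    Lagrange.eval_interpolate_at_node f (Set.injOn_id _)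
      (Finset.mem_image_of_mem d (Finset.mem_univ i))
  have hspec : spectrum ℝ ((U : Matrix n n 𝕜) * diagonal (fun i => (d i : 𝕜)) *
      star (U : Matrix n n 𝕜)) = Set.range d := by
    rw [Unitary.spectrum_star_right_conjugate, spectrum_real_diagonal_ofReal]
  have hsa : IsSelfAdjoint ((U : Matrix n n 𝕜) * diagonal (fun i => (d i : 𝕜)) *
      star (U : Matrix n n 𝕜)) :=
    (isHermitian_diagonal_iff.mpr fun i => by simp [IsSelfAdjoint]).isSelfAdjoint.conjugate _
  rw [cfc_congr (g := fun x => p.eval x) (by rw [hspec]; rintro _ ⟨i, rfl⟩; exact (hp i).symm),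
    cfc_polynomial p _ hsa, ← Unitary.conjStarAlgAut_apply (S := ℝ), aeval_algHom_apply,
    Unitary.conjStarAlgAut_apply, aeval_diagonal_ofReal]
  simp only [hp]

theorem Matrix.kronecker_mem_unitaryGroup {U : Matrix n n 𝕜} {V : Matrix m m 𝕜}
    (hU : U ∈ unitaryGroup n 𝕜) (hV : V ∈ unitaryGroup m 𝕜) :
    U ⊗ₖ V ∈ unitaryGroup (n × m) 𝕜 := by
  rw [mem_unitaryGroup_iff, star_eq_conjTranspose, conjTranspose_kronecker, ← mul_kronecker_mul,
    ← star_eq_conjTranspose, ← star_eq_conjTranspose, mem_unitaryGroup_iff.mp hU,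
    mem_unitaryGroup_iff.mp hV, one_kronecker_one]

theorem Matrix.IsHermitian.eq_unitary_mul_diagonal_mul_star {A : Matrix n n 𝕜}
    (hA : A.IsHermitian) :
    A = (hA.eigenvectorUnitary : Matrix n n 𝕜) * diagonal (fun i => (hA.eigenvalues i : 𝕜)) *
      star (hA.eigenvectorUnitary : Matrix n n 𝕜) :=
  hA.spectral_theorem

theorem cfc_kronecker {A : Matrix n n 𝕜} {B : Matrix m m 𝕜} (hA : A.IsHermitian)
    (hB : B.IsHermitian) {f g h : ℝ → ℝ}
    (hfgh : ∀ x ∈ spectrum ℝ A, ∀ y ∈ spectrum ℝ B, h (x * y) = f x * g y) :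
    cfc h (A ⊗ₖ B) = cfc f A ⊗ₖ cfc g B := by
  let W : unitaryGroup (n × m) 𝕜 :=
    ⟨_, kronecker_mem_unitaryGroup hA.eigenvectorUnitary.2 hB.eigenvectorUnitary.2⟩
  have hAB : A ⊗ₖ B = (W : Matrix (n × m) (n × m) 𝕜) *
      diagonal (fun p => ((hA.eigenvalues p.1 * hB.eigenvalues p.2 : ℝ) : 𝕜)) *
        star (W : Matrix (n × m) (n × m) 𝕜) := by
    conv_lhs => rw [hA.eq_unitary_mul_diagonal_mul_star, hB.eq_unitary_mul_diagonal_mul_star]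
    simp only [W, star_eq_conjTranspose, conjTranspose_kronecker, mul_kronecker_mul,
      diagonal_kronecker_diagonal, RCLike.ofReal_mul]
  rw [hAB, cfc_unitary_mul_diagonal_mul_star]
  conv_rhs => rw [hA.eq_unitary_mul_diagonal_mul_star, hB.eq_unitary_mul_diagonal_mul_star]
  rw [cfc_unitary_mul_diagonal_mul_star, cfc_unitary_mul_diagonal_mul_star]
  simp only [W, star_eq_conjTranspose, conjTranspose_kronecker, mul_kronecker_mul,
    diagonal_kronecker_diagonal, ← RCLike.ofReal_mul,
    hfgh _ (hA.eigenvalues_mem_spectrum_real _) _ (hB.eigenvalues_mem_spectrum_real _)]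

end FunctionalCalculus

theorem Matrix.kronecker_left_injective {R l m n p : Type*} [MonoidWithZero R]
    [IsCancelMulZero R] {B : Matrix n p R} (hB : B ≠ 0) :
    Function.Injective fun A : Matrix l m R => A ⊗ₖ B := by
  obtain ⟨k, k', hk⟩ : ∃ k k', B k k' ≠ 0 := by
    by_contra! h
    exact hB (Matrix.ext h)
  intro A C hAC
  ext i j
  exact mul_right_cancel₀ hk (congrFun (congrFun hAC (i, k)) (j, k'))

theorem Matrix.kronecker_right_injective {R l m n p : Type*} [MonoidWithZero R]
    [IsCancelMulZero R] {A : Matrix l m R} (hA : A ≠ 0) :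
    Function.Injective fun B : Matrix n p R => A ⊗ₖ B := by
  obtain ⟨i, i', hi⟩ : ∃ i i', A i i' ≠ 0 := by
    by_contra! h
    exact hA (Matrix.ext h)
  intro B C hBC
  ext k j
  exact mul_left_cancel₀ hi (congrFun (congrFun hBC (i, k)) (i', j))

/-- Differs from `x ^ r` only at `x = 0, r = 0`; this makes `mpow σ 0` the projection onto
the support of `σ`. -/
def rpowOnSupport (r x : ℝ) : ℝ := if x = 0 then 0 else x ^ r

theorem rpowOnSupport_mul {x y : ℝ} (hx : 0 ≤ x) (hy : 0 ≤ y) (r : ℝ) :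
    rpowOnSupport r (x * y) = rpowOnSupport r x * rpowOnSupport r y := by
  rcases hx.eq_or_lt with rfl | hx
  · simp [rpowOnSupport]
  rcases hy.eq_or_lt with rfl | hy
  · simp [rpowOnSupport]
  simp [rpowOnSupport, hx.ne', hy.ne', Real.mul_rpow hx.le hy.le]

theorem rpowOnSupport_add {x : ℝ} (hx : 0 ≤ x) (r s : ℝ) :
    rpowOnSupport (r + s) x = rpowOnSupport r x * rpowOnSupport s x := by
  rcases hx.eq_or_lt with rfl | hx
  · simp [rpowOnSupport]
  simp [rpowOnSupport, hx.ne', Real.rpow_add hx]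

theorem rpowOnSupport_one (x : ℝ) : rpowOnSupport 1 x = x := by
  by_cases hx : x = 0 <;> simp [rpowOnSupport, hx]

section MatrixPower

open scoped MatrixOrder

variable {n m : Type*} [Fintype n] [DecidableEq n] [Fintype m] [DecidableEq m]

theorem mpow_eq_cfc {A : Matrix n n ℂ} (hA : A.IsHermitian) (r : ℝ) :
    mpow A r = cfc (rpowOnSupport r) A := by
  rw [hA.cfc_eq, mpow, dif_pos hA]
  rfl

theorem isHermitian_mpow (A : Matrix n n ℂ) (r : ℝ) : (mpow A r).IsHermitian := by
  by_cases hA : A.IsHermitian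
  · rw [mpow_eq_cfc hA]
    exact cfc_predicate _ A
  · simp [mpow, hA]

theorem posSemidef_mpow {A : Matrix n n ℂ} (hA : A.PosSemidef) (r : ℝ) :
    (mpow A r).PosSemidef := by
  rw [← nonneg_iff_posSemidef, mpow_eq_cfc hA.isHermitian]
  refine cfc_nonneg fun x hx => ?_
  have hx : 0 ≤ x := spectrum_nonneg_of_nonneg hA.nonneg hx
  unfold rpowOnSupport
  split_ifs
  exacts [le_rfl, Real.rpow_nonneg hx r]

theorem mpow_mul_mpow {A : Matrix n n ℂ} (hA : A.PosSemidef) (r s : ℝ) :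
    mpow A r * mpow A s = mpow A (r + s) := by
  rw [mpow_eq_cfc hA.isHermitian, mpow_eq_cfc hA.isHermitian, mpow_eq_cfc hA.isHermitian,
    ← cfc_mul _ _ A (A.finite_real_spectrum.continuousOn _)
      (A.finite_real_spectrum.continuousOn _)]
  exact cfc_congr fun x hx =>
    (rpowOnSupport_add (spectrum_nonneg_of_nonneg hA.nonneg hx) r s).symm

theorem mpow_one {A : Matrix n n ℂ} (hA : A.IsHermitian) : mpow A 1 = A := by
  rw [mpow_eq_cfc hA, funext rpowOnSupport_one]
  exact cfc_id' ℝ A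

theorem mpow_kronecker {A : Matrix n n ℂ} {B : Matrix m m ℂ} (hA : A.PosSemidef)
    (hB : B.PosSemidef) (r : ℝ) :
    mpow (A ⊗ₖ B) r = mpow A r ⊗ₖ mpow B r := by
  rw [mpow_eq_cfc (hA.kronecker hB).isHermitian, mpow_eq_cfc hA.isHermitian,
    mpow_eq_cfc hB.isHermitian]
  exact cfc_kronecker hA.isHermitian hB.isHermitian fun x hx y hy =>
    rpowOnSupport_mul (spectrum_nonneg_of_nonneg hA.nonneg hx)
      (spectrum_nonneg_of_nonneg hB.nonneg hy) r

end MatrixPower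

theorem IsDensity.ne_zero {n : Type*} [Fintype n] {ρ : Matrix n n ℂ} (hρ : IsDensity ρ) :
    ρ ≠ 0 := by
  rintro rfl
  simpa using hρ.2

section Support

variable {n m : Type*} [Fintype n] [DecidableEq n] [Fintype m] [DecidableEq m]

theorem suppLE_iff_mpow_zero_mul {ρ σ : Matrix n n ℂ} (hσ : σ.PosSemidef) :
    suppLE ρ σ ↔ mpow σ 0 * ρ = ρ := by
  have hPσ : mpow σ 0 * σ = σ := by
    simpa only [zero_add, mpow_one hσ.isHermitian] using mpow_mul_mpow hσ 0 1
  have hσP : σ * mpow σ (-1) = mpow σ 0 := by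
    simpa only [add_neg_cancel, mpow_one hσ.isHermitian] using mpow_mul_mpow hσ 1 (-1)
  constructor
  · intro h
    refine ext_of_mulVec_single fun j => ?_
    obtain ⟨w, hw⟩ := h ⟨Pi.single j 1, rfl⟩
    simp only [mulVecLin_apply] at hw
    rw [← mulVec_mulVec, ← hw, mulVec_mulVec, hPσ]
  · rintro h _ ⟨v, rfl⟩
    refine ⟨mpow σ (-1) *ᵥ (ρ *ᵥ v), ?_⟩
    simp only [mulVecLin_apply, mulVec_mulVec, ← mul_assoc, hσP, h]

theorem suppLE_kronecker_iff {ρ1 σ1 : Matrix n n ℂ} {ρ2 σ2 : Matrix m m ℂ}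
    (hσ1 : σ1.PosSemidef) (hσ2 : σ2.PosSemidef) (hρ1 : ρ1 ≠ 0) (hρ2 : ρ2 ≠ 0) :
    suppLE (ρ1 ⊗ₖ ρ2) (σ1 ⊗ₖ σ2) ↔ suppLE ρ1 σ1 ∧ suppLE ρ2 σ2 := by
  have hP1 : mpow σ1 0 * mpow σ1 0 = mpow σ1 0 := by rw [mpow_mul_mpow hσ1, add_zero]
  have hP2 : mpow σ2 0 * mpow σ2 0 = mpow σ2 0 := by rw [mpow_mul_mpow hσ2, add_zero]
  rw [suppLE_iff_mpow_zero_mul hσ1, suppLE_iff_mpow_zero_mul hσ2,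
    suppLE_iff_mpow_zero_mul (hσ1.kronecker hσ2), mpow_kronecker hσ1 hσ2, ← mul_kronecker_mul]
  refine ⟨fun h => ⟨kronecker_left_injective hρ2 ?_, kronecker_right_injective hρ1 ?_⟩,
    fun ⟨h1, h2⟩ => by rw [h1, h2]⟩
  · calc (mpow σ1 0 * ρ1) ⊗ₖ ρ2
        = (mpow σ1 0 ⊗ₖ 1) * (ρ1 ⊗ₖ ρ2) := by rw [← mul_kronecker_mul, one_mul]
      _ = (mpow σ1 0 ⊗ₖ 1) * ((mpow σ1 0 * ρ1) ⊗ₖ (mpow σ2 0 * ρ2)) := by rw [h]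
      _ = ρ1 ⊗ₖ ρ2 := by rw [← mul_kronecker_mul, ← mul_assoc, hP1, one_mul, h]
  · calc ρ1 ⊗ₖ (mpow σ2 0 * ρ2)
        = (1 ⊗ₖ mpow σ2 0) * (ρ1 ⊗ₖ ρ2) := by rw [← mul_kronecker_mul, one_mul]
      _ = (1 ⊗ₖ mpow σ2 0) * ((mpow σ1 0 * ρ1) ⊗ₖ (mpow σ2 0 * ρ2)) := by rw [h]
      _ = ρ1 ⊗ₖ ρ2 := by
          rw [← mul_kronecker_mul, ← mul_assoc, ← mul_assoc, hP2, one_mul, h]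

end Support

section GeometricRenyi

variable {n m : Type*} [Fintype n] [DecidableEq n] [Fintype m] [DecidableEq m]

def geomQuasiEntropy (α : ℝ) (ρ σ : Matrix n n ℂ) : ℂ :=
  (σ * mpow (mpow σ (-(1/2)) * ρ * mpow σ (-(1/2))) α).trace

theorem geomRenyiReal_eq_log_geomQuasiEntropy (α : ℝ) (ρ σ : Matrix n n ℂ) :
    geomRenyiReal α ρ σ = (α - 1)⁻¹ * Real.log (geomQuasiEntropy α ρ σ).re :=
  rfl

theorem posSemidef_mpow_mul_mul_mpow {ρ : Matrix n n ℂ} (hρ : ρ.PosSemidef) (σ : Matrix n n ℂ)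
    (r : ℝ) : (mpow σ r * ρ * mpow σ r).PosSemidef := by
  simpa only [(isHermitian_mpow σ r).eq] using hρ.conjTranspose_mul_mul_same (mpow σ r)

theorem geomQuasiEntropy_kronecker {ρ1 σ1 : Matrix n n ℂ} {ρ2 σ2 : Matrix m m ℂ}
    (hρ1 : ρ1.PosSemidef) (hσ1 : σ1.PosSemidef) (hρ2 : ρ2.PosSemidef) (hσ2 : σ2.PosSemidef)
    (α : ℝ) :
    geomQuasiEntropy α (ρ1 ⊗ₖ ρ2) (σ1 ⊗ₖ σ2) =
      geomQuasiEntropy α ρ1 σ1 * geomQuasiEntropy α ρ2 σ2 := by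
  rw [geomQuasiEntropy, mpow_kronecker hσ1 hσ2, ← mul_kronecker_mul, ← mul_kronecker_mul,
    mpow_kronecker (posSemidef_mpow_mul_mul_mpow hρ1 σ1 _)
      (posSemidef_mpow_mul_mul_mpow hρ2 σ2 _), ← mul_kronecker_mul, trace_kronecker,
    geomQuasiEntropy, geomQuasiEntropy]

/-- With `X = σ^{-1/2} ρ σ^{-1/2}`, the trace is `‖X^{α/2} σ^{1/2}‖₂²`; if it vanished then
`X σ^{1/2} = 0`, hence `ρ = σ^{1/2} X σ^{1/2} = 0` because `ρ` lives on the support of `σ`. -/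
theorem geomQuasiEntropy_pos {ρ σ : Matrix n n ℂ} (hρ : ρ.PosSemidef) (hρ0 : ρ ≠ 0)
    (hσ : σ.PosSemidef) (hρσ : suppLE ρ σ) (α : ℝ) : 0 < geomQuasiEntropy α ρ σ := by
  set R := mpow σ (1/2)
  set S := mpow σ (-(1/2))
  set X := S * ρ * S
  set Z := mpow X (α/2)
  have hX : X.PosSemidef := posSemidef_mpow_mul_mul_mpow hρ σ _
  have hRR : R * R = σ := by
    rw [mpow_mul_mpow hσ, add_halves, mpow_one hσ.isHermitian]
  have hZZ : Z * Z = mpow X α := by rw [mpow_mul_mpow hX, add_halves]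
  have htr : geomQuasiEntropy α ρ σ = ((Z * R)ᴴ * (Z * R)).trace := by
    rw [geomQuasiEntropy, ← hZZ, ← hRR, conjTranspose_mul, (isHermitian_mpow σ _).eq,
      (isHermitian_mpow X _).eq, ← trace_mul_cycle, mul_assoc, mul_assoc, mul_assoc]
  rw [htr]
  refine lt_of_le_of_ne (posSemidef_conjTranspose_mul_self _).trace_nonneg
    (Ne.symm fun h0 => hρ0 ?_)
  have hZR : Z * R = 0 := trace_conjTranspose_mul_self_eq_zero_iff.mp h0
  have hXR : X * R = 0 := by
    rw [← mpow_one hX.isHermitian, ← sub_add_cancel 1 (α/2), ← mpow_mul_mpow hX, mul_assoc,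
      hZR, mul_zero]
  have hP : mpow σ 0 * ρ = ρ := (suppLE_iff_mpow_zero_mul hσ).mp hρσ
  have hP' : ρ * mpow σ 0 = ρ := by
    simpa only [conjTranspose_mul, hρ.isHermitian.eq, (isHermitian_mpow σ 0).eq] using
      congrArg conjTranspose hP
  calc ρ = (R * S) * ρ * (S * R) := by
        rw [mpow_mul_mpow hσ, mpow_mul_mpow hσ, add_neg_cancel, neg_add_cancel, hP, hP']
    _ = R * (X * R) := by simp only [X, mul_assoc]
    _ = 0 := by rw [hXR, mul_zero]

theorem geomRenyiReal_kronecker {ρ1 σ1 : Matrix n n ℂ} {ρ2 σ2 : Matrix m m ℂ} (α : ℝ)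
    (hρ1 : ρ1.PosSemidef) (hρ1' : ρ1 ≠ 0) (hσ1 : σ1.PosSemidef)
    (hρ2 : ρ2.PosSemidef) (hρ2' : ρ2 ≠ 0) (hσ2 : σ2.PosSemidef)
    (h1 : suppLE ρ1 σ1) (h2 : suppLE ρ2 σ2) :
    geomRenyiReal α (ρ1 ⊗ₖ ρ2) (σ1 ⊗ₖ σ2) = geomRenyiReal α ρ1 σ1 + geomRenyiReal α ρ2 σ2 := by
  obtain ⟨hq1, hq1'⟩ := Complex.pos_iff.mp (geomQuasiEntropy_pos hρ1 hρ1' hσ1 h1 α)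
  obtain ⟨hq2, -⟩ := Complex.pos_iff.mp (geomQuasiEntropy_pos hρ2 hρ2' hσ2 h2 α)
  simp only [geomRenyiReal_eq_log_geomQuasiEntropy]
  rw [geomQuasiEntropy_kronecker hρ1 hσ1 hρ2 hσ2, Complex.mul_re, ← hq1', zero_mul, sub_zero,
    Real.log_mul hq1.ne' hq2.ne', mul_add]

end GeometricRenyi

theorem stmt14_general {d1 d2 : ℕ} (α : ℝ)
    (ρ1 σ1 : Matrix (Fin d1) (Fin d1) ℂ) (ρ2 σ2 : Matrix (Fin d2) (Fin d2) ℂ)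
    (hρ1 : IsDensity ρ1) (hσ1 : IsDensity σ1) (hρ2 : IsDensity ρ2) (hσ2 : IsDensity σ2) :
    geomRenyi α (ρ1 ⊗ₖ ρ2) (σ1 ⊗ₖ σ2) = geomRenyi α ρ1 σ1 + geomRenyi α ρ2 σ2 := by
  have hsupp := suppLE_kronecker_iff hσ1.1 hσ2.1 hρ1.ne_zero hρ2.ne_zero
  have hadd := geomRenyiReal_kronecker α hρ1.1 hρ1.ne_zero hσ1.1 hρ2.1 hρ2.ne_zero hσ2.1
  by_cases h1 : suppLE ρ1 σ1 <;> by_cases h2 : suppLE ρ2 σ2 <;>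
    simp [geomRenyi, hsupp, h1, h2, hadd]

/-- additivity of the geometric Rényi divergence under tensor products. -/
theorem stmt14 {d1 d2 : ℕ} (α : ℝ) (hα : 1 < α) (hα2 : α ≤ 2)
    (ρ1 σ1 : Matrix (Fin d1) (Fin d1) ℂ) (ρ2 σ2 : Matrix (Fin d2) (Fin d2) ℂ)
    (hρ1 : IsDensity ρ1) (hσ1 : IsDensity σ1) (hρ2 : IsDensity ρ2) (hσ2 : IsDensity σ2) :
    geomRenyi α (ρ1 ⊗ₖ ρ2) (σ1 ⊗ₖ σ2) = geomRenyi α ρ1 σ1 + geomRenyi α ρ2 σ2 :=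
  stmt14_general α ρ1 σ1 ρ2 σ2 hρ1 hσ1 hρ2 hσ2
end
end
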